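/- arXiv:2604.01744 — 2 statements merged into one kernel-verified Lean document; each statement's English description precedes it below -/
import Mathlib

section
/- Let s ∈ ℂ and A = (A_1,…,A_n) ∈ ℂⁿ, and set g(t,A) = Σ_{k=1}^{n} A_k t^{k−1}/(k−1)!. Suppose {f^{(k)}_{j,m}} and {f̃^{(k)}_{j,m}} are two formal solutions of the nilpotent system dy_j/dt = y_{j+1} + ε V_j(ε, e^{±it}, y) (with y_{n+1} := 0) such that (ii) their ε⁰ parts equal the unperturbed solution, i.e. f^{(0)}_{j,m} = f̃^{(0)}_{j,m} = δ_{m,0} · (d^{j−1}/dt^{j−1}) g(t,A), and (iii) their zero-mode coefficients agree at t = s, i.e. f^{(k)}_{j,0}(s) = f̃^{(k)}_{j,0}(s) for all k ≥ 0 and all 1 ≤ j ≤ n. Then the two formal solutions coincide: f^{(k)}_{j,m} = f̃^{(k)}_{j,m} for all k, j, m. -/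
noncomputable section

open Polynomial

/-- Finite `ℂ[t]`-linear combinations of Fourier modes `e^{i m t}` (`m : ℤ`):
the mode-`m` coefficient of `x` is the polynomial `x m`. -/
abbrev FourierPoly : Type := AddMonoidAlgebra (Polynomial ℂ) ℤ

/-- Formal power series in `ε` whose coefficients are finite Fourier sums with
polynomial-in-`t` coefficients. -/
abbrev FSeries : Type := PowerSeries FourierPoly

/-- The mode `e^{i t}`, as a unit of `FSeries` (inverse `e^{-i t}`). -/
def zUnit : FSeriesˣ where
  val := PowerSeries.C (AddMonoidAlgebra.single 1 1)
  inv := PowerSeries.C (AddMonoidAlgebra.single (-1) 1)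
  val_inv := by
    rw [← map_mul, AddMonoidAlgebra.single_mul_single]
    norm_num [AddMonoidAlgebra.one_def]
  inv_val := by
    rw [← map_mul, AddMonoidAlgebra.single_mul_single]
    norm_num [AddMonoidAlgebra.one_def]

/-- Evaluation of a Laurent polynomial in `z` (an element of `ℂ[z,z⁻¹] = AddMonoidAlgebra ℂ ℤ`)
at `z = e^{i t}`, landing in `FSeries`. -/
def zEval : AddMonoidAlgebra ℂ ℤ →+* FSeries :=
  AddMonoidAlgebra.liftNCRingHom
    ((PowerSeries.C).comp (AddMonoidAlgebra.singleZeroRingHom.comp (Polynomial.C : ℂ →+* Polynomial ℂ)))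
    ((Units.coeHom _).comp (zpowersHom _ zUnit))
    (fun _ _ => Commute.all _ _)

/-- Evaluation of `V ∈ ℂ[ε, z, z⁻¹, y₁, …, yₙ]` (encoded as a polynomial in the `y`-variables
with coefficients in `ℂ[z,z⁻¹][ε]`) at `z = e^{i t}`, `ε = ε` (the power series variable)
and given formal series values of the `y`-variables. -/
def VEval {n : ℕ} (V : MvPolynomial (Fin n) (Polynomial (AddMonoidAlgebra ℂ ℤ)))
    (y : Fin n → FSeries) : FSeries :=
  MvPolynomial.eval₂ (Polynomial.eval₂RingHom zEval PowerSeries.X) y V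

/-- The formal series `y_j(ε,t) = Σ_k ε^k Σ_m f^{(k)}_{j,m}(t) e^{i m t}` attached to a family
`f^{(k)}_{j,m}` of polynomials (with, for each `k` and `j`, finite support in `m`). -/
def famSeries {n : ℕ} (F : ℕ → Fin n → FourierPoly) (j : Fin n) : FSeries :=
  PowerSeries.mk fun k => F k j

/-- The `(j+1)`-st component of the family, with the convention `f^{(k)}_{n+1,m} := 0`. -/
def famNext {n : ℕ} (F : ℕ → Fin n → FourierPoly) (k : ℕ) (j : Fin n) : FourierPoly :=
  if h : (j : ℕ) + 1 < n then F k ⟨(j : ℕ) + 1, h⟩ else 0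

/-- `F` encodes a formal solution `y_j(ε,t) = Σ_k ε^k Σ_m f^{(k)}_{j,m}(t) e^{i m t}` of the
nilpotent system `dy_j/dt = y_{j+1} + ε V_j(ε, e^{± i t}, y)` (with `y_{n+1} := 0`):
order by order in `ε` and mode by mode in `e^{i m t}`,
`(d/dt) f^{(k)}_{j,m} + i m f^{(k)}_{j,m} = f^{(k)}_{j+1,m} + [ε V_j(ε, e^{± i t}, y(ε,t))]_{ε^k e^{i m t}}`.
(Finiteness of the support in `m` at each order is built into `FourierPoly`.) -/
def IsNilpotentFormalSolution {n : ℕ}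
    (V : Fin n → MvPolynomial (Fin n) (Polynomial (AddMonoidAlgebra ℂ ℤ)))
    (F : ℕ → Fin n → FourierPoly) : Prop :=
  ∀ (k : ℕ) (j : Fin n) (m : ℤ),
    derivative ((F k j).coeff m) + Polynomial.C (Complex.I * (m : ℂ)) * (F k j).coeff m
      = (famNext F k j).coeff m
        + (PowerSeries.coeff k (PowerSeries.X * VEval (V j) (famSeries F))).coeff m

/-- `g(t,A) = Σ_{k=1}^{n} A_k t^{k-1}/(k-1)!` (here `0`-indexed:
`g = Σ_{k : Fin n} A_k t^k / k!`). -/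
def gPoly {n : ℕ} (A : Fin n → ℂ) : Polynomial ℂ :=
  ∑ k : Fin n, Polynomial.C (A k * (1 / ((k : ℕ).factorial : ℂ))) * Polynomial.X ^ (k : ℕ)

/-!
Since the `ε`-expansion starts with `ε V`, the forcing term at order `k` only involves orders
`< k`. Hence, by induction on `k`, the difference of the two solutions at order `k` solves, mode by
mode, the homogeneous equation `δ' + i m δ = δ_{j+1}`, and the nilpotent coupling lets us descend
from `j = n` to `j = 1`. For `m ≠ 0` the only polynomial solution of `δ' + i m δ = 0` is `0`
(compare leading coefficients); for `m = 0`, `δ` is constant and vanishes at `t = s`.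
-/

theorem MvPolynomial.eval₂_sub_eval₂_mem {R S σ : Type*} [CommSemiring R] [CommRing S]
    (f : R →+* S) (I : Ideal S) (p : MvPolynomial σ R) {x y : σ → S}
    (h : ∀ i, x i - y i ∈ I) : p.eval₂ f x - p.eval₂ f y ∈ I := by
  rw [← Ideal.Quotient.eq, MvPolynomial.eval₂_comp_left, MvPolynomial.eval₂_comp_left]
  congr 1
  funext i
  exact Ideal.Quotient.eq.mpr (h i)

theorem Polynomial.eq_zero_of_derivative_add_C_mul_eq_zero {R : Type*} [Semiring R]
    [NoZeroDivisors R] {c : R} (hc : c ≠ 0) {p : R[X]} (h : derivative p + C c * p = 0) :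
    p = 0 := by
  have hlead := congrArg (coeff · p.natDegree) h
  simp only [coeff_add, coeff_derivative, coeff_natDegree_succ_eq_zero, coeff_C_mul,
    coeff_zero, zero_mul, zero_add] at hlead
  exact leadingCoeff_eq_zero.mp ((mul_eq_zero.mp hlead).resolve_left hc)

theorem Polynomial.eq_of_derivative_add_C_mul_eq {R : Type*} [CommRing R] [NoZeroDivisors R]
    [CharZero R] {c s : R} {p q : R[X]}
    (h : derivative p + C c * p = derivative q + C c * q)
    (hs : c = 0 → p.eval s = q.eval s) : p = q := by
  have hdiff : derivative (p - q) + C c * (p - q) = 0 := by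
    rw [derivative_sub]
    linear_combination h
  rw [← sub_eq_zero]
  by_cases hc : c = 0
  · subst hc
    rw [map_zero, zero_mul, add_zero] at hdiff
    have hconst := eq_C_of_derivative_eq_zero hdiff
    have hval : (p - q).eval s = 0 := by rw [eval_sub, hs rfl, sub_self]
    rw [hconst, eval_C] at hval
    rw [hconst, hval, map_zero]
  · exact eq_zero_of_derivative_add_C_mul_eq_zero hc hdiff

section FormalSolution

variable {n : ℕ}

theorem coeff_X_mul_VEval_congr {V : MvPolynomial (Fin n) (Polynomial (AddMonoidAlgebra ℂ ℤ))}
    {y y' : Fin n → FSeries} {k : ℕ}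
    (h : ∀ i, ∀ d < k, PowerSeries.coeff d (y i) = PowerSeries.coeff d (y' i)) :
    PowerSeries.coeff k (PowerSeries.X * VEval V y)
      = PowerSeries.coeff k (PowerSeries.X * VEval V y') := by
  rcases k with _ | k
  · simp only [PowerSeries.coeff_zero_X_mul]
  rw [PowerSeries.coeff_succ_X_mul, PowerSeries.coeff_succ_X_mul, ← sub_eq_zero, ← map_sub]
  refine PowerSeries.X_pow_dvd_iff.mp ?_ k k.lt_succ_self
  rw [← Ideal.mem_span_singleton]
  refine MvPolynomial.eval₂_sub_eval₂_mem _ _ V fun i => Ideal.mem_span_singleton.mpr ?_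
  exact PowerSeries.X_pow_dvd_iff.mpr fun d hd => by rw [map_sub, h i d hd, sub_self]

theorem eq_of_forall_famNext_eq_imp {F F' : ℕ → Fin n → FourierPoly} {k : ℕ}
    (h : ∀ j, famNext F k j = famNext F' k j → F k j = F' k j) (j : Fin n) :
    F k j = F' k j := by
  refine h j ?_
  unfold famNext
  split_ifs with hj
  · exact eq_of_forall_famNext_eq_imp h ⟨j + 1, hj⟩
  · rfl
termination_by n - j

theorem IsNilpotentFormalSolution.eq_of_forcing_eq
    {V : Fin n → MvPolynomial (Fin n) (Polynomial (AddMonoidAlgebra ℂ ℤ))}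
    {F F' : ℕ → Fin n → FourierPoly}
    (hsol : IsNilpotentFormalSolution V F) (hsol' : IsNilpotentFormalSolution V F')
    {s : ℂ} {k : ℕ} {j : Fin n}
    (hforce : PowerSeries.coeff k (PowerSeries.X * VEval (V j) (famSeries F))
      = PowerSeries.coeff k (PowerSeries.X * VEval (V j) (famSeries F')))
    (hnext : famNext F k j = famNext F' k j)
    (hres : ((F k j).coeff 0).eval s = ((F' k j).coeff 0).eval s) :
    F k j = F' k j := by
  ext m : 1
  refine eq_of_derivative_add_C_mul_eq (c := Complex.I * m) (s := s) ?_ fun hc => ?_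
  · rw [hsol k j m, hsol' k j m, hforce, hnext]
  · obtain rfl : m = 0 := by simpa [Complex.I_ne_zero] using hc
    exact hres

end FormalSolution

theorem nilpotent_uniqueness_general {n : ℕ}
    (V : Fin n → MvPolynomial (Fin n) (Polynomial (AddMonoidAlgebra ℂ ℤ)))
    (s : ℂ)
    (F F' : ℕ → Fin n → FourierPoly)
    (hsol : IsNilpotentFormalSolution V F) (hsol' : IsNilpotentFormalSolution V F')
    (hres : ∀ (k : ℕ) (j : Fin n), ((F k j).coeff 0).eval s = ((F' k j).coeff 0).eval s) :
    F = F' := by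
  funext k
  induction k using Nat.strong_induction_on with
  | _ k ih =>
    have hforce (j : Fin n) : PowerSeries.coeff k (PowerSeries.X * VEval (V j) (famSeries F))
        = PowerSeries.coeff k (PowerSeries.X * VEval (V j) (famSeries F')) :=
      coeff_X_mul_VEval_congr fun i d hd => by simp only [famSeries, PowerSeries.coeff_mk, ih d hd]
    exact funext <| eq_of_forall_famNext_eq_imp fun j hnext =>
      hsol.eq_of_forcing_eq hsol' (hforce j) hnext (hres k j)

/-- uniqueness of the naive perturbative solution, nilpotent case:
two formal solutions of `dy_j/dt = y_{j+1} + ε V_j(ε,e^{±it},y)` whose `ε⁰` parts both equal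
the unperturbed solution `δ_{m,0} d^{j-1}g/dt^{j-1}` and whose zero-mode coefficients agree
at `t = s` coincide. -/
theorem nilpotent_uniqueness {n : ℕ} (hn : 0 < n)
    (V : Fin n → MvPolynomial (Fin n) (Polynomial (AddMonoidAlgebra ℂ ℤ)))
    (s : ℂ) (A : Fin n → ℂ)
    (F F' : ℕ → Fin n → FourierPoly)
    (hsol : IsNilpotentFormalSolution V F) (hsol' : IsNilpotentFormalSolution V F')
    (hinit : ∀ j : Fin n, F 0 j = AddMonoidAlgebra.single 0 (derivative^[(j : ℕ)] (gPoly A)))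
    (hinit' : ∀ j : Fin n, F' 0 j = AddMonoidAlgebra.single 0 (derivative^[(j : ℕ)] (gPoly A)))
    (hres : ∀ (k : ℕ) (j : Fin n), ((F k j).coeff 0).eval s = ((F' k j).coeff 0).eval s) :
    F = F' :=
  nilpotent_uniqueness_general V s F F' hsol hsol' hres

end
end

section
/- Let {f_{m,k}} be a scalar formal solution of the N-th order equation Π_r (d/dt − i m_r)^{n_r} y = ε V(ε, e^{±it}, y, y′, …, y^{(N−1)}), and let s ∈ ℂ. Then the shifted family {g_{m,k}} defined by g_{m,k}(t) := f_{m,k}(t − s) (the exponentials e^{imt} are NOT shifted) is again a scalar formal solution of the same equation. -/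
noncomputable section

open Polynomial

/-- The mode-by-mode derivative `d/dt` on finite Fourier sums:
`p(t) e^{imt} ↦ (p'(t) + i m p(t)) e^{imt}`. -/
def modeDeriv (x : FourierPoly) : FourierPoly :=
  Finsupp.sum x.coeff fun m p =>
    AddMonoidAlgebra.single m (derivative p + Polynomial.C (Complex.I * (m : ℂ)) * p)

/-- The derivative `d/dt`, acting coefficientwise in `ε` on `FSeries`. -/
def seriesDeriv (y : FSeries) : FSeries :=
  PowerSeries.mk fun k => modeDeriv (PowerSeries.coeff k y)

/-- The operator `d/dt + c` on `ℂ[t]`. -/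
def shiftedDeriv (c : ℂ) : Module.End ℂ (Polynomial ℂ) :=
  (Polynomial.derivative : Polynomial ℂ →ₗ[ℂ] Polynomial ℂ) + c • 1

/-- The operator `Π_{r=1}^{d} (d/dt + i(m - m_r))^{n_r}` on `ℂ[t]`. -/
def opProd {d : ℕ} (mr : Fin d → ℤ) (nv : Fin d → ℕ) (m : ℤ) :
    Module.End ℂ (Polynomial ℂ) :=
  (List.ofFn fun r : Fin d => shiftedDeriv (Complex.I * ((m : ℂ) - (mr r : ℂ))) ^ nv r).prod

/-- `F` encodes a scalar formal solution `y(ε,t) = Σ_k ε^k Σ_m f_{m,k}(t) e^{imt}` of the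
`N`-th order equation `Π_r (d/dt - i m_r)^{n_r} y = ε V(ε, e^{±it}, y, y', …, y^{(N-1)})`
(`N = n_1 + ⋯ + n_d`): order by order in `ε` and mode by mode in `e^{imt}`,
`Π_r (d/dt + i(m - m_r))^{n_r} f_{m,k} = [ε V(ε, e^{±it}, y, y', …, y^{(N-1)})]_{ε^k e^{imt}}`.
(Finiteness of the support in `m` at each order is built into `FourierPoly`.) -/
def IsScalarFormalSolution {d : ℕ} (mr : Fin d → ℤ) (nv : Fin d → ℕ)
    (V : MvPolynomial (Fin (∑ r, nv r)) (Polynomial (AddMonoidAlgebra ℂ ℤ)))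
    (F : ℕ → FourierPoly) : Prop :=
  ∀ (k : ℕ) (m : ℤ),
    opProd mr nv m ((F k).coeff m)
      = (PowerSeries.coeff k (PowerSeries.X *
          VEval V (fun l => seriesDeriv^[(l : ℕ)] (PowerSeries.mk fun k' => F k')))).coeff m

/-! The shift `p(t) ↦ p(t - s)` is a `ℂ`-algebra endomorphism of `ℂ[t]` commuting with `d/dt`.
Applied coefficientwise it fixes the modes `e^{imt}` and the constants, hence it commutes with
`d/dt` on formal series, with the evaluation of `V`, and with the constant-coefficient operators
`Π_r (d/dt + c_r)^{n_r}`; so it maps formal solutions to formal solutions. -/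

lemma coeff_modeDeriv (x : FourierPoly) (m : ℤ) :
    (modeDeriv x).coeff m = derivative (x.coeff m) + C (Complex.I * m) * x.coeff m := by
  classical
  rw [modeDeriv, ← AddMonoidAlgebra.coeffAddEquiv_apply, map_finsuppSum, Finsupp.sum_apply]
  simp only [AddMonoidAlgebra.coeffAddEquiv_apply, AddMonoidAlgebra.coeff_single,
    Finsupp.single_apply, Finsupp.sum, Finset.sum_ite_eq', Finsupp.mem_support_iff]
  split_ifs with h
  · rfl
  · simp [not_not.mp h]

lemma zEval_single (m : ℤ) (c : ℂ) :
    zEval (AddMonoidAlgebra.single m c) =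
      PowerSeries.C (AddMonoidAlgebra.single 0 (C c)) * ((zUnit ^ m : FSeriesˣ) : FSeries) :=
  AddMonoidAlgebra.liftNC_single _ _ m c

lemma zEval_eq : zEval = PowerSeries.C.comp (AddMonoidAlgebra.mapRingHom ℤ C) := by
  apply AddMonoidAlgebra.ringHom_ext'
  · ext c : 1
    change zEval (AddMonoidAlgebra.single 0 c) =
      PowerSeries.C (AddMonoidAlgebra.mapRingHom ℤ C (AddMonoidAlgebra.single 0 c))
    rw [zEval_single, zpow_zero, Units.val_one, mul_one, AddMonoidAlgebra.mapRingHom_single]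
  · ext : 1
    change zEval (AddMonoidAlgebra.single 1 1) =
      PowerSeries.C (AddMonoidAlgebra.mapRingHom ℤ C (AddMonoidAlgebra.single 1 1))
    rw [zEval_single, zpow_one, AddMonoidAlgebra.mapRingHom_single, map_one,
      ← AddMonoidAlgebra.one_def, map_one, one_mul]
    rfl

lemma shiftedDeriv_commute {f : Module.End ℂ ℂ[X]} (hf : ∀ p, derivative (f p) = f (derivative p))
    (c : ℂ) : Commute (shiftedDeriv c) f :=
  (show Commute (derivative : Module.End ℂ ℂ[X]) f from LinearMap.ext hf).add_left
    ((Commute.one_left f).smul_left c)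

lemma opProd_commute {f : Module.End ℂ ℂ[X]} (hf : ∀ p, derivative (f p) = f (derivative p))
    {d : ℕ} (mr : Fin d → ℤ) (nv : Fin d → ℕ) (m : ℤ) : Commute (opProd mr nv m) f :=
  Commute.list_prod_left _ _ fun _ hg => by
    obtain ⟨r, rfl⟩ := List.mem_ofFn.mp hg
    exact (shiftedDeriv_commute hf _).pow_left _

section AlgHom

variable (f : ℂ[X] →ₐ[ℂ] ℂ[X])

local notation "Φ" => AddMonoidAlgebra.mapRingHom ℤ (f : ℂ[X] →+* ℂ[X])

lemma modeDeriv_mapRingHom (hf : ∀ p, derivative (f p) = f (derivative p)) (x : FourierPoly) :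
    modeDeriv (Φ x) = Φ (modeDeriv x) := by
  ext m : 1
  have hC (c : ℂ) : f (C c) = C c := f.commutes c
  simp [coeff_modeDeriv, hf, hC]

lemma seriesDeriv_map (hf : ∀ p, derivative (f p) = f (derivative p)) (y : FSeries) :
    seriesDeriv (PowerSeries.map Φ y) = PowerSeries.map Φ (seriesDeriv y) := by
  ext k : 1
  simp [seriesDeriv, modeDeriv_mapRingHom f hf]

lemma map_comp_zEval : (PowerSeries.map Φ).comp zEval = zEval := by
  have hC : (f : ℂ[X] →+* ℂ[X]).comp C = C := RingHom.ext f.commutes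
  refine RingHom.ext fun x => ?_
  rw [zEval_eq, RingHom.comp_apply, RingHom.comp_apply, PowerSeries.map_C,
    ← RingHom.comp_apply (AddMonoidAlgebra.mapRingHom ℤ (f : ℂ[X] →+* ℂ[X])),
    ← AddMonoidAlgebra.mapRingHom_comp, hC]

lemma map_VEval {n : ℕ} (V : MvPolynomial (Fin n) (Polynomial (AddMonoidAlgebra ℂ ℤ)))
    (y : Fin n → FSeries) :
    PowerSeries.map Φ (VEval V y) = VEval V (PowerSeries.map Φ ∘ y) := by
  have : (PowerSeries.map Φ).comp (eval₂RingHom zEval PowerSeries.X) =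
      eval₂RingHom zEval PowerSeries.X := by
    ext : 1
    · rw [RingHom.comp_assoc, eval₂RingHom_comp_C, map_comp_zEval]
    · simp
  rw [VEval, VEval, MvPolynomial.eval₂_comp_left, this]

theorem IsScalarFormalSolution.map {d : ℕ} {mr : Fin d → ℤ} {nv : Fin d → ℕ}
    {V : MvPolynomial (Fin (∑ r, nv r)) (Polynomial (AddMonoidAlgebra ℂ ℤ))} {F : ℕ → FourierPoly}
    (hsol : IsScalarFormalSolution mr nv V F) (hf : ∀ p, derivative (f p) = f (derivative p)) :
    IsScalarFormalSolution mr nv V fun k => Φ (F k) := by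
  intro k m
  have hmk : PowerSeries.mk (fun k => Φ (F k)) = PowerSeries.map Φ (PowerSeries.mk F) := by
    ext; simp
  have hiter (l : ℕ) : seriesDeriv^[l] (PowerSeries.map Φ (PowerSeries.mk F)) =
      PowerSeries.map Φ (seriesDeriv^[l] (PowerSeries.mk F)) :=
    (Function.Commute.iterate_left (seriesDeriv_map f hf) l) _
  have hop : opProd mr nv m (f ((F k).coeff m)) = f (opProd mr nv m ((F k).coeff m)) :=
    LinearMap.congr_fun (opProd_commute (f := f.toLinearMap) hf mr nv m).eq _
  rw [AddMonoidAlgebra.coeff_mapRingHom, AlgHom.coe_toRingHom, hop, hsol k m, hmk]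
  simp only [hiter]
  have hrhs :
      PowerSeries.X * VEval V (fun l => PowerSeries.map Φ (seriesDeriv^[l] (PowerSeries.mk F))) =
        PowerSeries.map Φ (PowerSeries.X * VEval V fun l => seriesDeriv^[l] (PowerSeries.mk F)) := by
    rw [map_mul, PowerSeries.map_X, map_VEval]
    rfl
  rw [hrhs, PowerSeries.coeff_map, AddMonoidAlgebra.coeff_mapRingHom]
  rfl

end AlgHom

lemma derivative_aeval_X_sub_C (s : ℂ) (p : ℂ[X]) :
    derivative (aeval (X - C s) p) = aeval (X - C s) (derivative p) := by
  rw [← comp_eq_aeval, ← comp_eq_aeval, derivative_comp, derivative_sub, derivative_X,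
    derivative_C, sub_zero, one_mul]

/-- shift invariance of scalar formal solutions: if `{f_{m,k}}` is a scalar
formal solution of `Π_r (d/dt - i m_r)^{n_r} y = ε V(ε,e^{±it},y,…,y^{(N-1)})` and `s ∈ ℂ`,
then the shifted family `g_{m,k}(t) := f_{m,k}(t - s)` (the exponentials `e^{imt}` are NOT
shifted) is again a scalar formal solution of the same equation. -/
theorem scalar_shift {d : ℕ} (mr : Fin d → ℤ) (nv : Fin d → ℕ)
    (V : MvPolynomial (Fin (∑ r, nv r)) (Polynomial (AddMonoidAlgebra ℂ ℤ)))
    (F : ℕ → FourierPoly)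
    (hsol : IsScalarFormalSolution mr nv V F) (s : ℂ) :
    IsScalarFormalSolution mr nv V
      (fun k => AddMonoidAlgebra.ofCoeff (Finsupp.mapRange (fun p => p.comp (Polynomial.X - Polynomial.C s))
        (by simp) (F k).coeff)) :=
  hsol.map (aeval (X - C s)) (derivative_aeval_X_sub_C s)

end
end
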